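/- arXiv:0807.3865 — 3 statements merged into one kernel-verified Lean document; each statement's English description precedes it below -/
import Mathlib

section
/- Let N ≥ 2 and let d ∈ 𝔽₂^N be a rule vector with associated characteristic polynomials Δ_k (0 ≤ k ≤ N-1, with Δ_{-2}=0, Δ_{-1}=1). For every k with 1 ≤ k ≤ N-1, the polynomial division of Δ_k by Δ_{k-1} in 𝔽₂[X] has quotient exactly X + d_k and remainder exactly Δ_{k-2}. Consequently, the sequence of quotients produced by Euclid's algorithm applied to the pair (Δ_{N-1}, Δ_{N-2}) is X + d_{N-1}, X + d_{N-2}, …, X + d_0; in particular the constant terms of the quotients form the mirror image of the rule vector d. -/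
open Polynomial

/-- Transition matrix of a null-boundary linear hybrid CA over 𝔽₂ with rule
vector `d`: tridiagonal, diagonal entries `d i`, sub/super-diagonal entries 1. -/
def lhcaMatrix (N : ℕ) (d : Fin N → ZMod 2) : Matrix (Fin N) (Fin N) (ZMod 2) :=
  Matrix.of fun i j =>
    if i = j then d i
    else if (i : ℕ) + 1 = (j : ℕ) ∨ (j : ℕ) + 1 = (i : ℕ) then 1 else 0

/-- Characteristic polynomial of the LHCA transition matrix. -/
noncomputable def lhcaCharPoly (N : ℕ) (d : Fin N → ZMod 2) : Polynomial (ZMod 2) :=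
  (lhcaMatrix N d).charpoly

lemma lhca_charmatrix_apply (n : ℕ) (e : Fin n → ZMod 2) (i j : Fin n) :
    Matrix.charmatrix (lhcaMatrix n e) i j =
      if i = j then X + C (e i)
      else if (i : ℕ) + 1 = (j : ℕ) ∨ (j : ℕ) + 1 = (i : ℕ) then 1 else 0 := by
  by_cases h : i = j
  · subst h
    simp [Matrix.charmatrix_apply_eq, lhcaMatrix, sub_eq_add_neg, CharTwo.neg_eq]
  · rw [Matrix.charmatrix_apply_ne _ _ _ h, CharTwo.neg_eq]
    simp only [lhcaMatrix, Matrix.of_apply, if_neg h]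
    split <;> simp

lemma submatrix_castSucc (n : ℕ) (e : Fin (n+2) → ZMod 2) :
    (Matrix.charmatrix (lhcaMatrix (n+2) e)).submatrix Fin.castSucc Fin.castSucc
      = Matrix.charmatrix (lhcaMatrix (n+1) (fun i => e i.castSucc)) := by
  ext i j
  simp only [Matrix.submatrix_apply, lhca_charmatrix_apply, Fin.ext_iff,
    Fin.coe_castSucc]

lemma submatrix_castSucc2 (n : ℕ) (e : Fin (n+2) → ZMod 2) :
    (Matrix.charmatrix (lhcaMatrix (n+2) e)).submatrix (fun i : Fin n => i.castSucc.castSucc)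
        (fun i : Fin n => i.castSucc.castSucc)
      = Matrix.charmatrix (lhcaMatrix n (fun i => e i.castSucc.castSucc)) := by
  ext i j
  simp only [Matrix.submatrix_apply, lhca_charmatrix_apply, Fin.ext_iff,
    Fin.coe_castSucc]

lemma lhca_charpoly_rec (n : ℕ) (e : Fin (n+2) → ZMod 2) :
    (lhcaMatrix (n+2) e).charpoly
      = (X + C (e (Fin.last (n+1)))) * (lhcaMatrix (n+1) (fun i => e i.castSucc)).charpoly
        + (lhcaMatrix n (fun i => e i.castSucc.castSucc)).charpoly := by
  have hneg : (-1 : Polynomial (ZMod 2)) = 1 := CharTwo.neg_eq 1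
  set B := Matrix.charmatrix (lhcaMatrix (n+2) e) with hB
  have hBa : ∀ i j : Fin (n+2), B i j =
      if (i:ℕ) = (j:ℕ) then X + C (e i)
      else if (i : ℕ) + 1 = (j : ℕ) ∨ (j : ℕ) + 1 = (i : ℕ) then 1 else 0 := by
    intro i j
    rw [hB, lhca_charmatrix_apply]
    congr 1
    simp [Fin.ext_iff]
  rw [Matrix.charpoly, Matrix.det_succ_row B (Fin.last (n+1)),
    Fin.sum_univ_castSucc, Fin.sum_univ_castSucc]
  have hz : ∀ j : Fin n, B (Fin.last (n+1)) (j.castSucc.castSucc) = 0 := by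
    intro j
    rw [hBa]
    have h1 : (Fin.last (n+1) : ℕ) = n+1 := rfl
    have h2 : ((j.castSucc.castSucc : Fin (n+2)) : ℕ) = (j : ℕ) := rfl
    rw [if_neg (by omega), if_neg (by omega)]
  have hsum0 : (∑ j : Fin n, (-1 : Polynomial (ZMod 2)) ^
      ((Fin.last (n+1) : ℕ) + ((j.castSucc.castSucc : Fin (n+2)) : ℕ))
      * B (Fin.last (n+1)) j.castSucc.castSucc
      * (B.submatrix (Fin.last (n+1)).succAbove (j.castSucc.castSucc).succAbove).det) = 0 := by
    apply Finset.sum_eq_zero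
    intro j _
    rw [hz j, mul_zero, zero_mul]
  rw [hsum0, zero_add]
  have hBll : B (Fin.last (n+1)) (Fin.last (n+1)) = X + C (e (Fin.last (n+1))) := by
    rw [hBa, if_pos rfl]
  have hBlc : B (Fin.last (n+1)) ((Fin.last n).castSucc) = 1 := by
    rw [hBa]
    have h1 : (Fin.last (n+1) : ℕ) = n+1 := rfl
    have h2 : (((Fin.last n).castSucc : Fin (n+2)) : ℕ) = n := rfl
    rw [if_neg (by omega), if_pos (by omega)]
  rw [hBll, hBlc]
  simp only [hneg, one_pow, one_mul, mul_one]
  rw [Fin.succAbove_last, submatrix_castSucc]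
  rw [add_comm]
  congr 1
  -- now: det M₂ = charpoly of size n
  set M₂ := B.submatrix Fin.castSucc ((Fin.last n).castSucc).succAbove with hM2
  have hsA : ∀ j : Fin (n+1), ((Fin.last n).castSucc).succAbove j
      = if (j:ℕ) < n then j.castSucc else j.succ := by
    intro j
    rw [Fin.succAbove]
    congr 1
  rw [Matrix.det_succ_column M₂ (Fin.last n), Fin.sum_univ_castSucc]
  have hz2 : ∀ i : Fin n, M₂ i.castSucc (Fin.last n) = 0 := by
    intro i
    rw [hM2, Matrix.submatrix_apply, hsA, if_neg (by simp), hBa]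
    have h2 : (((Fin.last n).succ : Fin (n+2)) : ℕ) = n+1 := rfl
    have h3 : (((i.castSucc : Fin (n+1)).castSucc : Fin (n+2)) : ℕ) = (i:ℕ) := rfl
    rw [if_neg (by omega), if_neg (by omega)]
  have hsum2 : (∑ i : Fin n, (-1 : Polynomial (ZMod 2)) ^
      (((i.castSucc : Fin (n+1)) : ℕ) + ((Fin.last n : Fin (n+1)) : ℕ))
      * M₂ i.castSucc (Fin.last n)
      * (M₂.submatrix (i.castSucc).succAbove (Fin.last n).succAbove).det) = 0 := by
    apply Finset.sum_eq_zero
    intro i _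
    rw [hz2 i, mul_zero, zero_mul]
  rw [hsum2, zero_add]
  simp only [hneg, one_pow, one_mul, mul_one]
  have hM2ll : M₂ (Fin.last n) (Fin.last n) = 1 := by
    rw [hM2, Matrix.submatrix_apply, hsA, if_neg (by simp), hBa]
    have h2 : (((Fin.last n).succ : Fin (n+2)) : ℕ) = n+1 := rfl
    have h3 : (((Fin.last n : Fin (n+1)).castSucc : Fin (n+2)) : ℕ) = n := rfl
    rw [if_neg (by omega), if_pos (by omega)]
  rw [hM2ll]
  simp only [one_mul, mul_one, Fin.succAbove_last]
  have : M₂.submatrix Fin.castSucc Fin.castSucc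
      = Matrix.charmatrix (lhcaMatrix n (fun i => e i.castSucc.castSucc)) := by
    ext i j
    rw [Matrix.submatrix_apply, hM2, Matrix.submatrix_apply, hsA,
      if_pos (by simpa using j.isLt), ← submatrix_castSucc2 n e, Matrix.submatrix_apply]
  rw [this]
  rfl

lemma lhcaCharPoly_zero (e : Fin 0 → ZMod 2) : lhcaCharPoly 0 e = 1 := by
  simp [lhcaCharPoly, Matrix.charpoly, Matrix.det_fin_zero]

lemma lhcaCharPoly_one (e : Fin 1 → ZMod 2) : lhcaCharPoly 1 e = X + C (e 0) := by
  rw [lhcaCharPoly, Matrix.charpoly, Matrix.det_fin_one, Matrix.charmatrix_apply_eq,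
    sub_eq_add_neg, CharTwo.neg_eq]
  rfl

lemma lhcaCharPoly_monic (n : ℕ) (e : Fin n → ZMod 2) : (lhcaCharPoly n e).Monic :=
  Matrix.charpoly_monic _

lemma lhcaCharPoly_degree (n : ℕ) (e : Fin n → ZMod 2) :
    (lhcaCharPoly n e).degree = (n : ℕ) := by
  rw [degree_eq_natDegree (lhcaCharPoly_monic n e).ne_zero]
  rw [lhcaCharPoly, Matrix.charpoly_natDegree_eq_dim, Fintype.card_fin]

lemma lhcaCharPoly_rec (n : ℕ) (e : Fin (n+2) → ZMod 2) :
    lhcaCharPoly (n+2) e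
      = (X + C (e (Fin.last (n+1)))) * lhcaCharPoly (n+1) (fun i => e i.castSucc)
        + lhcaCharPoly n (fun i => e i.castSucc.castSucc) :=
  lhca_charpoly_rec n e

set_option maxHeartbeats 2000000 in
/-- Division of `Δ_k` by `Δ_{k-1}` in 𝔽₂[X] has quotient `X + d_k` and
remainder `Δ_{k-2}` (with the index shift `Δ (k+2) = Δ_k`, `Δ 1 = Δ_{-1} = 1`,
`Δ 0 = Δ_{-2} = 0`).  Consequently the quotients produced by Euclid's
algorithm on the pair `(Δ_{N-1}, Δ_{N-2})` are
`X + d_{N-1}, X + d_{N-2}, …, X + d_0`: the constant terms of the quotient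
sequence form the mirror image of the rule vector `d`. -/
theorem lhca_euclid_quotients (N : ℕ) (hN : 2 ≤ N) (d : Fin N → ZMod 2)
    (Δ : ℕ → Polynomial (ZMod 2))
    (h0 : Δ 0 = 0) (h1 : Δ 1 = 1)
    (hΔ : ∀ (k : ℕ) (hk : k < N),
      Δ (k + 2) = lhcaCharPoly (k + 1) (fun i => d (Fin.castLE hk i)))
    (r : ℕ → Polynomial (ZMod 2))
    (hr0 : r 0 = Δ (N + 1)) (hr1 : r 1 = Δ N)
    (hr : ∀ i, r (i + 2) = r i % r (i + 1)) :
    (∀ (k : ℕ) (hk : k < N), 1 ≤ k →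
      Δ (k + 2) / Δ (k + 1) = X + C (d ⟨k, hk⟩) ∧
      Δ (k + 2) % Δ (k + 1) = Δ k) ∧
    (∀ (i : ℕ) (hi : i < N),
      r i / r (i + 1) = X + C (d ⟨N - 1 - i, by omega⟩)) := by
  -- the three-term recurrence
  have hrec : ∀ (k : ℕ) (hk : k < N),
      Δ (k + 2) = (X + C (d ⟨k, hk⟩)) * Δ (k + 1) + Δ k := by
    intro k hk
    match k with
    | 0 =>
      rw [hΔ 0 hk, h1, h0, mul_one, add_zero, lhcaCharPoly_one]
      have : Fin.castLE hk (0 : Fin 1) = ⟨0, hk⟩ := Fin.ext (by simp)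
      rw [this]
    | 1 =>
      have h0N : 0 < N := by omega
      rw [hΔ 1 hk, hΔ 0 h0N, h1, lhcaCharPoly_rec 0, lhcaCharPoly_zero]
      have hl : Fin.castLE hk (Fin.last 1) = ⟨1, hk⟩ := Fin.ext rfl
      have f1 : (fun i : Fin 1 => d (Fin.castLE hk i.castSucc))
          = (fun i : Fin 1 => d (Fin.castLE h0N i)) := by
        funext i; congr 1
      rw [hl, f1]
    | (m+2) =>
      have h1N : m + 1 < N := by omega
      have h0N : m < N := by omega
      rw [hΔ (m+2) hk, hΔ (m+1) h1N, hΔ m h0N, lhcaCharPoly_rec (m+1)]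
      have hl : Fin.castLE hk (Fin.last (m+2)) = ⟨m+2, hk⟩ := Fin.ext rfl
      have f1 : (fun i : Fin (m+2) => d (Fin.castLE hk i.castSucc))
          = (fun i : Fin (m+2) => d (Fin.castLE h1N i)) := by
        funext i; congr 1
      have f2 : (fun i : Fin (m+1) => d (Fin.castLE hk i.castSucc.castSucc))
          = (fun i : Fin (m+1) => d (Fin.castLE h0N i)) := by
        funext i; congr 1
      rw [hl, f1, f2]
  -- part 1
  have part1 : ∀ (k : ℕ) (hk : k < N), 1 ≤ k →
      Δ (k + 2) / Δ (k + 1) = X + C (d ⟨k, hk⟩) ∧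
      Δ (k + 2) % Δ (k + 1) = Δ k := by
    intro k hk hk1
    have hform : Δ (k+1) = lhcaCharPoly k (fun i => d (Fin.castLE (by omega : k ≤ N) i)) := by
      obtain ⟨m, rfl⟩ : ∃ m, k = m + 1 := ⟨k - 1, by omega⟩
      rw [hΔ m (by omega : m < N)]
    have hmono : (Δ (k+1)).Monic := hform ▸ lhcaCharPoly_monic _ _
    have hdegg : (Δ (k+1)).degree = (k : ℕ) := hform ▸ lhcaCharPoly_degree _ _
    have hdegr : (Δ k).degree < (Δ (k+1)).degree := by
      rw [hdegg]
      obtain (rfl | ⟨m, rfl⟩) : k = 1 ∨ ∃ m, k = m + 2 := by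
        rcases Nat.lt_or_ge k 2 with h | h
        · left; omega
        · right; exact ⟨k - 2, by omega⟩
      · rw [h1, degree_one]
        exact_mod_cast Nat.zero_lt_one
      · rw [hΔ m (by omega : m < N), lhcaCharPoly_degree]
        exact_mod_cast (by omega : m + 1 < m + 2)
    have key := div_modByMonic_unique (f := Δ (k+2)) (X + C (d ⟨k, hk⟩)) (Δ k) hmono
      ⟨by rw [hrec k hk]; ring, hdegr⟩
    exact ⟨by rw [← divByMonic_eq_div _ hmono, key.1],
           by rw [← modByMonic_eq_mod _ hmono, key.2]⟩
  refine ⟨part1, ?_⟩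
  -- r i = Δ (N + 1 - i)
  have hri : ∀ i, i + 1 ≤ N → r i = Δ (N + 1 - i) ∧ r (i + 1) = Δ (N - i) := by
    intro i
    induction i with
    | zero => intro _; simpa using ⟨hr0, hr1⟩
    | succ i ih =>
      intro hi
      obtain ⟨hri, hri1⟩ := ih (by omega)
      refine ⟨by rw [hri1]; congr 1; omega, ?_⟩
      rw [hr i, hri, hri1]
      set k := N - 1 - i with hk
      have e1 : N + 1 - i = k + 2 := by omega
      have e2 : N - i = k + 1 := by omega
      have e3 : N - (i + 1) = k := by omega
      rw [e1, e2, e3]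
      exact (part1 k (by omega) (by omega)).2
  intro i hi
  by_cases hlast : i = N - 1
  · subst hlast
    obtain ⟨hra, hrb⟩ := hri (N-1) (by omega)
    have e1 : N + 1 - (N - 1) = 2 := by omega
    have e2 : N - (N - 1) = 1 := by omega
    rw [hra, hrb, e1, e2, h1, EuclideanDomain.div_one, hΔ 0 (by omega : 0 < N), lhcaCharPoly_one]
    have : Fin.castLE (by omega : 0 < N) (0 : Fin 1) = ⟨N - 1 - (N-1), by omega⟩ :=
      Fin.ext (by simp)
    rw [this]
  · obtain ⟨hra, hrb⟩ := hri i (by omega)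
    set k := N - 1 - i with hk
    have e1 : N + 1 - i = k + 2 := by omega
    have e2 : N - i = k + 1 := by omega
    rw [hra, hrb, e1, e2]
    exact (part1 k (by omega) (by omega)).1
end

section
/- Let n ≥ 1 and let p, q ∈ 𝔽₂[X] with p monic of degree n and q of degree n-1. Define the Euclidean remainder sequence r_0 = p, r_1 = q, and r_{i+1} = (r_{i-1} mod r_i) for i ≥ 1. Then there exists a rule vector d ∈ 𝔽₂^n of length n whose LHCA has characteristic polynomial Δ_{n-1} = p and characteristic subpolynomial Δ_{n-2} = q if and only if Euclid's algorithm applied to p and q produces exactly n quotients, each of degree one; equivalently, if and only if deg r_i = n - i for all 0 ≤ i ≤ n. -/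
open Polynomial

open Matrix in
section
variable (e : ℕ → ZMod 2)

open Matrix

lemma zmod2_neg : ∀ a : ZMod 2, -a = a := by decide

lemma neg_one_eq : (-1 : Polynomial (ZMod 2)) = 1 := by
  rw [neg_eq_iff_add_eq_zero, ← Polynomial.C_1, ← Polynomial.C_add]
  have : (1 + 1 : ZMod 2) = 0 := by decide
  rw [this, Polynomial.C_0]

lemma lhcaMatrix_submatrix (N : ℕ) :
    (lhcaMatrix (N+1) (fun i => e i)).submatrix Fin.castSucc Fin.castSucc
      = lhcaMatrix N (fun i => e i) := by
  ext i j
  simp only [lhcaMatrix, Matrix.submatrix_apply, Matrix.of_apply, Fin.coe_castSucc,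
    Fin.castSucc_inj]

lemma lhcaMatrix_submatrix2 (N : ℕ) :
    (lhcaMatrix (N+2) (fun i => e i)).submatrix (fun i : Fin N => i.castSucc.castSucc)
      (fun i : Fin N => i.castSucc.castSucc) = lhcaMatrix N (fun i => e i) := by
  ext i j
  simp only [lhcaMatrix, Matrix.submatrix_apply, Matrix.of_apply, Fin.coe_castSucc,
    Fin.castSucc_inj]

lemma charmatrix_submatrix {a b : ℕ} (M : Matrix (Fin b) (Fin b) (ZMod 2))
    (f : Fin a → Fin b) (hf : Function.Injective f) :
    (charmatrix M).submatrix f f = charmatrix (M.submatrix f f) := by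
  ext i j
  by_cases h : i = j
  · subst h; simp
  · rw [Matrix.submatrix_apply, charmatrix_apply_ne _ _ _ (hf.ne h),
      charmatrix_apply_ne _ _ _ h, Matrix.submatrix_apply]

lemma lhca_rec (N : ℕ) :
    lhcaCharPoly (N+2) (fun i => e i)
      = (X + C (e (N+1))) * lhcaCharPoly (N+1) (fun i => e i)
        + lhcaCharPoly N (fun i => e i) := by
  set A := charmatrix (lhcaMatrix (N+2) (fun i => e i)) with hA
  have hAij : ∀ i j : Fin (N+2), A i j =
      if i = j then X + C (e i) else
      if (i : ℕ) + 1 = (j : ℕ) ∨ (j : ℕ) + 1 = (i : ℕ) then 1 else 0 := by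
    intro i j
    by_cases h : i = j
    · subst h
      rw [hA, charmatrix_apply_eq, sub_eq_add_neg, ← Polynomial.C_neg, zmod2_neg, if_pos rfl]
      simp [lhcaMatrix]
    · rw [hA, charmatrix_apply_ne _ _ _ h, if_neg h]
      simp only [lhcaMatrix, Matrix.of_apply, if_neg h]
      split
      · rw [← Polynomial.C_neg, zmod2_neg, Polynomial.C_1]
      · simp
  have hdet : lhcaCharPoly (N+2) (fun i => e i) = A.det := rfl
  rw [hdet, det_succ_row A (Fin.last (N+1))]
  rw [Fin.sum_univ_castSucc, Fin.sum_univ_castSucc]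
  have hzero : ∀ j : Fin N,
      A (Fin.last (N+1)) (j.castSucc.castSucc) = 0 := by
    intro j
    rw [hAij]
    have hj : (j : ℕ) < N := j.isLt
    have hj : (j : ℕ) < N := j.isLt
    rw [if_neg, if_neg]
    · simp only [Fin.coe_castSucc, Fin.val_last]; omega
    · intro h; apply_fun Fin.val at h; simp only [Fin.coe_castSucc, Fin.val_last] at h; omega
  have hsum0 : (∑ j : Fin N, (-1 : Polynomial (ZMod 2)) ^ ((Fin.last (N+1)) + (j.castSucc.castSucc) : ℕ)
      * A (Fin.last (N+1)) (j.castSucc.castSucc)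
      * det (A.submatrix (Fin.last (N+1)).succAbove (j.castSucc.castSucc).succAbove)) = 0 := by
    apply Finset.sum_eq_zero
    intro j _
    rw [hzero j, mul_zero, zero_mul]
  rw [hsum0, zero_add]
  -- main diagonal term
  have hlastlast : A (Fin.last (N+1)) (Fin.last (N+1)) = X + C (e (N+1)) := by
    rw [hAij, if_pos rfl]; rfl
  have hsub1 : A.submatrix (Fin.last (N+1)).succAbove (Fin.last (N+1)).succAbove
      = charmatrix (lhcaMatrix (N+1) (fun i => e i)) := by
    rw [Fin.succAbove_last, hA, charmatrix_submatrix _ _ (Fin.castSucc_injective _),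
      lhcaMatrix_submatrix]
  -- off-diagonal term
  have hoff : A (Fin.last (N+1)) ((Fin.last N).castSucc) = 1 := by
    rw [hAij, if_neg, if_pos]
    · right; simp only [Fin.coe_castSucc, Fin.val_last]
    · intro h; apply_fun Fin.val at h
      simp only [Fin.coe_castSucc, Fin.val_last] at h; omega
  have hsub2 : det (A.submatrix (Fin.last (N+1)).succAbove
        ((Fin.last N).castSucc).succAbove)
      = lhcaCharPoly N (fun i => e i) := by
    rw [Fin.succAbove_last]
    set B := A.submatrix Fin.castSucc ((Fin.last N).castSucc).succAbove with hB
    rw [det_succ_column B (Fin.last N), Fin.sum_univ_castSucc]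
    have hz : ∀ i : Fin N, B i.castSucc (Fin.last N) = 0 := by
      intro i
      show A (i.castSucc.castSucc) (((Fin.last N).castSucc).succAbove (Fin.last N)) = 0
      rw [Fin.succAbove_castSucc_self]
      have hi : (i : ℕ) < N := i.isLt
      rw [hAij, if_neg, if_neg]
      · simp only [Fin.coe_castSucc, Fin.val_succ, Fin.val_last]; omega
      · intro h; apply_fun Fin.val at h
        simp only [Fin.coe_castSucc, Fin.val_succ, Fin.val_last] at h; omega
    have hzsum : (∑ i : Fin N, (-1 : Polynomial (ZMod 2)) ^ ((i.castSucc : ℕ) + (Fin.last N : ℕ))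
        * B i.castSucc (Fin.last N)
        * det (B.submatrix i.castSucc.succAbove (Fin.last N).succAbove)) = 0 := by
      apply Finset.sum_eq_zero
      intro i _
      rw [hz i, mul_zero, zero_mul]
    rw [hzsum, zero_add]
    have hBll : B (Fin.last N) (Fin.last N) = 1 := by
      show A ((Fin.last N).castSucc) (((Fin.last N).castSucc).succAbove (Fin.last N)) = 1
      rw [Fin.succAbove_castSucc_self]
      rw [hAij, if_neg, if_pos]
      · left; simp only [Fin.coe_castSucc, Fin.val_succ, Fin.val_last]
      · intro h; apply_fun Fin.val at h
        simp only [Fin.coe_castSucc, Fin.val_succ, Fin.val_last] at h; omega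
    have hBsub : B.submatrix Fin.castSucc Fin.castSucc
        = charmatrix (lhcaMatrix N (fun i => e i)) := by
      have h1 : B.submatrix Fin.castSucc Fin.castSucc
          = A.submatrix (fun i : Fin N => i.castSucc.castSucc)
              (fun j : Fin N => j.castSucc.castSucc) := by
        ext i j
        simp only [hB, Matrix.submatrix_apply]
        rw [Fin.succAbove_castSucc_of_lt _ _ (Fin.castSucc_lt_last j)]
      rw [h1, hA, charmatrix_submatrix _ _
        (fun a b h => Fin.castSucc_injective _ (Fin.castSucc_injective _ h)),
        lhcaMatrix_submatrix2]
    rw [Fin.succAbove_last, hBsub]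
    have : det (charmatrix (lhcaMatrix N (fun i => e i))) = lhcaCharPoly N (fun i => e i) := rfl
    rw [this]
    simp [neg_one_eq]
    rw [hBll, one_mul]
  rw [hsub2, hoff, hlastlast, hsub1]
  have : det (charmatrix (lhcaMatrix (N+1) (fun i => e i))) = lhcaCharPoly (N+1) (fun i => e i) := rfl
  rw [this]
  simp [neg_one_eq]
  ring

lemma lhca_zero (d : Fin 0 → ZMod 2) : lhcaCharPoly 0 d = 1 := by
  simp [lhcaCharPoly, Matrix.charpoly, Matrix.det_fin_zero]

lemma lhca_one (d : Fin 1 → ZMod 2) : lhcaCharPoly 1 d = X + C (d 0) := by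
  rw [lhcaCharPoly, Matrix.charpoly, Matrix.det_fin_one, charmatrix_apply_eq]
  have h : lhcaMatrix 1 d 0 0 = d 0 := by simp [lhcaMatrix]
  rw [h, sub_eq_add_neg, ← Polynomial.C_neg, zmod2_neg _]

lemma lhca_monicP (N : ℕ) (d : Fin N → ZMod 2) : (lhcaCharPoly N d).Monic :=
  Matrix.charpoly_monic _

lemma lhca_degree (N : ℕ) (d : Fin N → ZMod 2) : (lhcaCharPoly N d).degree = N := by
  have h1 : (lhcaCharPoly N d).natDegree = N := by
    rw [lhcaCharPoly, Matrix.charpoly_natDegree_eq_dim, Fintype.card_fin]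
  rw [Polynomial.degree_eq_natDegree (lhca_monicP N d).ne_zero, h1]

lemma div_mod_eq (b s c : Polynomial (ZMod 2)) (hb : b.Monic) (hc : c.degree < b.degree) :
    (b * s + c) / b = s ∧ (b * s + c) % b = c := by
  have h := Polynomial.div_modByMonic_unique (f := b * s + c) (g := b) s c hb ⟨by ring, hc⟩
  exact ⟨by rw [← Polynomial.divByMonic_eq_div _ hb, h.1],
    by rw [← Polynomial.modByMonic_eq_mod _ hb, h.2]⟩

lemma zmod2_ne_zero : ∀ a : ZMod 2, a ≠ 0 → a = 1 := by decide

lemma degree_one_eq {f : Polynomial (ZMod 2)} (hf : f.degree = 1) :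
    f = X + C (f.coeff 0) := by
  have hnd : f.natDegree = 1 := natDegree_eq_of_degree_eq_some hf
  have hne : f ≠ 0 := by intro h; rw [h] at hf; simp at hf
  have hlc : f.coeff 1 ≠ 0 := by
    rw [← hnd]; exact mt leadingCoeff_eq_zero.mp hne
  have h1 : f.coeff 1 = 1 := zmod2_ne_zero _ hlc
  have := Polynomial.eq_X_add_C_of_degree_le_one (le_of_eq hf)
  rwa [h1, Polynomial.C_1, one_mul] at this

lemma degree_zero_eq_one {f : Polynomial (ZMod 2)} (hf : f.degree = 0) : f = 1 := by
  have h := Polynomial.eq_C_of_degree_le_zero (le_of_eq hf)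
  have hne : f.coeff 0 ≠ 0 := by
    intro h0; rw [h, h0, Polynomial.C_0] at hf; simp at hf
  rw [h, zmod2_ne_zero _ hne, Polynomial.C_1]

-- the D-sequence facts
lemma D_step (e : ℕ → ZMod 2) (k : ℕ) :
    lhcaCharPoly (k+1) (fun i => e i)
      = (X + C (e k)) * lhcaCharPoly k (fun i => e i)
        + (if k = 0 then 0 else lhcaCharPoly (k-1) (fun i => e i)) := by
  match k with
  | 0 => simp [lhca_one, lhca_zero]
  | (m+1) => simpa using lhca_rec e m

lemma D_div_mod (e : ℕ → ZMod 2) (k : ℕ) :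
    lhcaCharPoly (k+1) (fun i => e i) / lhcaCharPoly k (fun i => e i) = X + C (e k) ∧
    lhcaCharPoly (k+1) (fun i => e i) % lhcaCharPoly k (fun i => e i)
      = (if k = 0 then 0 else lhcaCharPoly (k-1) (fun i => e i)) := by
  have hmon := lhca_monicP k (fun i : Fin k => e i)
  have hdegc : (if k = 0 then 0 else lhcaCharPoly (k-1) (fun i : Fin (k-1) => e i)).degree
      < (lhcaCharPoly k (fun i : Fin k => e i)).degree := by
    rw [lhca_degree]
    match k with
    | 0 => simp
    | (m+1) =>
      simp only [if_neg (Nat.succ_ne_zero m), Nat.add_sub_cancel, lhca_degree]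
      exact_mod_cast Nat.lt_succ_self m
  have h := div_mod_eq _ (X + C (e k)) _ hmon hdegc
  rw [mul_comm] at h
  rw [← D_step e k] at h
  exact h

end

open Matrix

/-- Lemma of Cattell–Muzio: for `p` monic of degree `n` and `q` of degree
`n - 1`, there is a rule vector `d ∈ 𝔽₂ⁿ` whose LHCA has characteristic
polynomial `Δ_{n-1} = p` and characteristic subpolynomial `Δ_{n-2} = q`
iff Euclid's algorithm applied to `p` and `q` produces exactly `n` quotients,
each of degree one; equivalently, iff the remainder sequence
`r 0 = p, r 1 = q, r (i+2) = r i % r (i+1)` satisfies `deg (r i) = n - i`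
for all `0 ≤ i ≤ n`. -/
theorem lhca_synthesis_euclid (n : ℕ) (hn : 1 ≤ n) (p q : Polynomial (ZMod 2))
    (hp : p.Monic) (hpdeg : p.natDegree = n) (hq : q.degree = (n - 1 : ℕ))
    (r : ℕ → Polynomial (ZMod 2))
    (hr0 : r 0 = p) (hr1 : r 1 = q)
    (hr : ∀ i, r (i + 2) = r i % r (i + 1)) :
    (∃ d : Fin n → ZMod 2,
        lhcaCharPoly n d = p ∧
        lhcaCharPoly (n - 1) (fun i => d (Fin.castLE (by omega) i)) = q) ↔
    ((∀ i < n, (r i / r (i + 1)).degree = 1) ∧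
     (∀ i ≤ n, (r i).degree = (n - i : ℕ))) := by
  constructor
  · rintro ⟨d, hd1, hd2⟩
    set e : ℕ → ZMod 2 := fun m => if h : m < n then d ⟨m, h⟩ else 0 with he
    have hDn : lhcaCharPoly n (fun i : Fin n => e i) = p := by
      rw [← hd1]; congr 1; funext i; simp [he, i.isLt]
    have hDn1 : lhcaCharPoly (n-1) (fun i : Fin (n-1) => e i) = q := by
      rw [← hd2]; congr 1; funext i
      have hi : (i : ℕ) < n := by omega
      simp only [he, dif_pos hi]
      congr 1
    have key : ∀ i, i ≤ n → r i = lhcaCharPoly (n - i) (fun j : Fin (n-i) => e j) := by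
      intro i
      induction i using Nat.strong_induction_on with
      | _ i ih =>
        match i with
        | 0 => intro _; rw [hr0, Nat.sub_zero, hDn]
        | 1 => intro _; rw [hr1, hDn1]
        | (i+2) =>
          intro h2
          have h0 := ih i (by omega) (by omega)
          have h1 := ih (i+1) (by omega) (by omega)
          rw [hr i, h0, h1]
          have hni : n - i = (n - (i+1)) + 1 := by omega
          rw [hni, (D_div_mod e (n - (i+1))).2, if_neg (by omega : n - (i+1) ≠ 0),
            Nat.sub_sub]
    refine ⟨fun i hi => ?_, fun i hi => ?_⟩
    · rw [key i (le_of_lt hi), key (i+1) hi]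
      have hni : n - i = (n - (i+1)) + 1 := by omega
      rw [hni, (D_div_mod e (n - (i+1))).1]
      exact degree_X_add_C _
    · rw [key i hi, lhca_degree]
  · rintro ⟨hquot, hdeg⟩
    set e : ℕ → ZMod 2 := fun m => (r (n - 1 - m) / r (n - m)).coeff 0 with he
    have hrn : r n = 1 := by
      apply degree_zero_eq_one
      have := hdeg n le_rfl
      rwa [Nat.sub_self, Nat.cast_zero] at this
    have hq1 : ∀ i, i < n → r i / r (i+1) = X + C ((r i / r (i+1)).coeff 0) :=
      fun i hi => degree_one_eq (hquot i hi)
    have key : ∀ k, k ≤ n → lhcaCharPoly k (fun j : Fin k => e j) = r (n - k) := by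
      intro k
      induction k using Nat.strong_induction_on with
      | _ k ih =>
        match k with
        | 0 => intro _; rw [lhca_zero, Nat.sub_zero, hrn]
        | 1 =>
          intro _
          rw [lhca_one]
          have hd : (r (n-1)).degree = 1 := by
            have h := hdeg (n-1) (by omega)
            rw [show n - (n-1) = 1 from by omega] at h
            exact_mod_cast h
          have hdiv1 : r (n-1) / r n = r (n-1) := by
            rw [hrn]
            have := div_mod_eq 1 (r (n-1)) 0 monic_one
              (by rw [Polynomial.degree_zero, Polynomial.degree_one]; exact WithBot.bot_lt_coe 0)
            simpa using this.1
          have he0 : e ((0 : Fin 1) : ℕ) = (r (n-1)).coeff 0 := by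
            simp only [he, Fin.val_zero, Nat.sub_zero, hdiv1]
          rw [he0]
          exact (degree_one_eq hd).symm
        | (k+2) =>
          intro h2
          have h0 := ih k (by omega) (by omega)
          have h1 := ih (k+1) (by omega) (by omega)
          rw [D_step e (k+1), if_neg (Nat.succ_ne_zero k), Nat.add_sub_cancel, h0, h1]
          set i := n - (k+2) with hidef
          have hi1 : n - (k+1) = i + 1 := by omega
          have hi2 : n - k = i + 2 := by omega
          have hin : i < n := by omega
          have he1 : e (k+1) = (r i / r (i+1)).coeff 0 := by
            show (r (n - 1 - (k+1)) / r (n - (k+1))).coeff 0 = _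
            have e1 : n - 1 - (k+1) = i := by omega
            have e2 : n - (k+1) = i + 1 := by omega
            rw [e1, e2]
          rw [hi1, hi2, he1, ← hq1 i hin, mul_comm, hr i]
          exact EuclideanDomain.div_add_mod (r i) (r (i+1))
    refine ⟨fun j : Fin n => e j, ?_, ?_⟩
    · rw [key n le_rfl, Nat.sub_self, hr0]
    · have hfun : (fun i : Fin (n-1) =>
          (fun j : Fin n => e j) (Fin.castLE (by omega) i)) = fun i : Fin (n-1) => e i := rfl
      rw [hfun, key (n-1) (by omega), show n - (n-1) = 1 from by omega, hr1]
end

section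
/- Let p ∈ 𝔽₂[X] be monic of degree n ≥ 1. Then p is an HCA polynomial, i.e., there exists a rule vector d ∈ 𝔽₂^n of length n whose LHCA has characteristic polynomial p, if and only if there exists a polynomial q ∈ 𝔽₂[X] with deg q < n satisfying the congruence q² + (X² + X)·p'·q + 1 ≡ 0 (mod p) such that Euclid's algorithm applied to p and q (remainder sequence r_0 = p, r_1 = q, r_{i+1} = r_{i-1} mod r_i) results in exactly n quotients each of degree one, equivalently deg r_i = n - i for all 0 ≤ i ≤ n. Here p' denotes the formal derivative of p. -/
open Polynomial

/-- Remainder sequence of Euclid's algorithm applied to `(p, q)`. -/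
noncomputable def euclidRem (p q : Polynomial (ZMod 2)) : ℕ → Polynomial (ZMod 2)
  | 0 => p
  | 1 => q
  | (i + 2) => euclidRem p q i % euclidRem p q (i + 1)

noncomputable def TT (e : ℕ → ZMod 2) : ℕ → Polynomial (ZMod 2)
  | 0 => 1
  | 1 => X + C (e 0)
  | (k+2) => (X + C (e (k+1))) * TT e (k+1) + TT e k

noncomputable def Gd (e : ℕ → ZMod 2) : ℕ → Polynomial (ZMod 2)
  | 0 => 0
  | (k+1) => Gd e k + X + C (e k + 1)

lemma ptwo : (2 : Polynomial (ZMod 2)) = 0 := CharTwo.two_eq_zero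

lemma ZMod2_sq (a : ZMod 2) : a * a = a := by revert a; decide

lemma TT_congr (e e' : ℕ → ZMod 2) : ∀ k, (∀ i, i < k → e i = e' i) → TT e k = TT e' k := by
  intro k
  induction k using Nat.strong_induction_on with
  | _ k ih =>
    match k with
    | 0 => intro _; rfl
    | 1 => intro h; simp [TT, h 0 one_pos]
    | (k+2) =>
      intro h
      rw [TT, TT, h (k+1) (by omega), ih (k+1) (by omega) (fun i hi => h i (by omega)),
        ih k (by omega) (fun i hi => h i (by omega))]

lemma TT_md (e : ℕ → ZMod 2) : ∀ k, (TT e k).Monic ∧ (TT e k).degree = (k : ℕ) := by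
  intro k
  induction k using Nat.strong_induction_on with
  | _ k ih =>
    match k with
    | 0 => exact ⟨monic_one, degree_one⟩
    | 1 => exact ⟨monic_X_add_C _, degree_X_add_C _⟩
    | (k+2) =>
      obtain ⟨h1, h1d⟩ := ih (k+1) (by omega)
      obtain ⟨h0, h0d⟩ := ih k (by omega)
      have hm : ((X + C (e (k+1))) * TT e (k+1)).Monic := (monic_X_add_C _).mul h1
      have hdm : ((X + C (e (k+1))) * TT e (k+1)).degree = ((k+2 : ℕ) : WithBot ℕ) := by
        rw [degree_mul, degree_X_add_C, h1d]
        norm_cast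
        omega
      have hdlt : (TT e k).degree < ((X + C (e (k+1))) * TT e (k+1)).degree := by
        rw [hdm, h0d]; exact_mod_cast by omega
      exact ⟨by rw [TT]; exact hm.add_of_left hdlt,
        by rw [TT, degree_add_eq_left_of_degree_lt hdlt, hdm]⟩

lemma TT_monic (e : ℕ → ZMod 2) (k : ℕ) : (TT e k).Monic := (TT_md e k).1
lemma TT_degree (e : ℕ → ZMod 2) (k : ℕ) : (TT e k).degree = (k : ℕ) := (TT_md e k).2

lemma TT_det (e : ℕ → ZMod 2) :
    ∀ k, TT e (k+2) * TT (fun i => e (i+1)) k + TT e (k+1) * TT (fun i => e (i+1)) (k+1) = 1 := by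
  intro k
  induction k using Nat.strong_induction_on with
  | _ k ih =>
    match k with
    | 0 =>
      show ((X + C (e 1)) * (X + C (e 0)) + 1) * 1 + (X + C (e 0)) * (X + C (e 1)) = 1
      linear_combination ((X + C (e 0)) * (X + C (e 1))) * ptwo
    | (k+1) =>
      have IH := ih k (by omega)
      have h1 : TT e (k+1+2) = (X + C (e (k+2))) * TT e (k+2) + TT e (k+1) := rfl
      have h2 : TT (fun i => e (i+1)) (k+2) =
          (X + C (e (k+2))) * TT (fun i => e (i+1)) (k+1) + TT (fun i => e (i+1)) k := rfl
      rw [h1, h2]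
      set A := TT e (k+2); set B := TT e (k+1)
      set S1 := TT (fun i => e (i+1)) (k+1); set S0 := TT (fun i => e (i+1)) k
      linear_combination IH + ((X + C (e (k+2))) * A * S1) * ptwo

lemma TT_deriv (e : ℕ → ZMod 2) (k : ℕ) :
    derivative (TT e (k+2)) =
      TT e (k+1) + (X + C (e (k+1))) * derivative (TT e (k+1)) + derivative (TT e k) := by
  rw [show TT e (k+2) = (X + C (e (k+1))) * TT e (k+1) + TT e k from rfl]
  simp [derivative_mul]

/-- The key identity `(X²+X)·T_{k+1}' + T_k + S_k = G_{k+1}·T_{k+1}`. -/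
lemma TT_E (e : ℕ → ZMod 2) :
    ∀ k, (X^2 + X) * derivative (TT e (k+1)) + TT e k + TT (fun i => e (i+1)) k
      = Gd e (k+1) * TT e (k+1) := by
  intro k
  induction k using Nat.strong_induction_on with
  | _ k ih =>
    match k with
    | 0 =>
      show (X^2+X) * derivative (X + C (e 0)) + 1 + 1 = (0 + X + C (e 0 + 1)) * (X + C (e 0))
      have hCC : (C (e 0) : Polynomial (ZMod 2)) * C (e 0) = C (e 0) := by
        rw [← C_mul, ZMod2_sq]
      simp only [derivative_add, derivative_X, derivative_C, add_zero, C_add, C_1, zero_add]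
      linear_combination hCC + (1 - C (e 0)^2 - X * C (e 0)) * ptwo
    | 1 =>
      have hCC0 : (C (e 0) : Polynomial (ZMod 2)) * C (e 0) = C (e 0) := by
        rw [← C_mul, ZMod2_sq]
      have hCC1 : (C (e 1) : Polynomial (ZMod 2)) * C (e 1) = C (e 1) := by
        rw [← C_mul, ZMod2_sq]
      show (X^2+X) * derivative ((X + C (e 1)) * (X + C (e 0)) + 1) + (X + C (e 0)) + (X + C (e 1))
        = ((0 + X + C (e 0 + 1)) + X + C (e 1 + 1)) * ((X + C (e 1)) * (X + C (e 0)) + 1)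
      simp only [derivative_add, derivative_mul, derivative_X, derivative_C, derivative_one,
        add_zero, zero_add, one_mul, mul_one, C_add, C_1]
      linear_combination (X + C (e 1)) * hCC0 + (X + C (e 0)) * hCC1 +
        (- 1 - C (e 0) * C (e 1)^2 - C (e 0)^2 * C (e 1) - X * C (e 1)^2
         - 2 * X * C (e 0) * C (e 1) - X * C (e 0)^2 - X^2 * C (e 1) - X^2 * C (e 0)) * ptwo
    | (k+2) =>
      have hCC : (C (e (k+2)) : Polynomial (ZMod 2)) * C (e (k+2)) = C (e (k+2)) := by
        rw [← C_mul, ZMod2_sq]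
      have IH1 := ih (k+1) (by omega)
      have IH2 := ih k (by omega)
      have hD2 := TT_deriv e (k+1)
      have hD1 := TT_deriv e k
      -- rewrite the derivative of T_{k+3} in the goal and of T_{k+2} in IH1
      rw [show k+2+1 = k+1+2 from rfl, hD2]
      rw [show k+1+1 = k+2 from rfl] at IH1
      have h1 : TT e (k+1+2) = (X + C (e (k+2))) * TT e (k+2) + TT e (k+1) := rfl
      have h2 : TT (fun i => e (i+1)) (k+2) =
          (X + C (e (k+2))) * TT (fun i => e (i+1)) (k+1) + TT (fun i => e (i+1)) k := rfl
      have hT : TT e (k+2) = (X + C (e (k+1))) * TT e (k+1) + TT e k := rfl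
      have hG3 : Gd e (k+2+1) = Gd e (k+2) + X + C (e (k+2) + 1) := rfl
      have hG2 : Gd e (k+2) = Gd e (k+1) + X + C (e (k+1) + 1) := rfl
      rw [h1, h2, hG3, hG2]
      rw [hG2] at IH1
      simp only [C_add, C_1] at IH1 ⊢
      set T2 := TT e (k+2)
      set T1 := TT e (k+1)
      set T0 := TT e k
      set S1 := TT (fun i => e (i+1)) (k+1)
      set S0 := TT (fun i => e (i+1)) k
      set D2 := derivative (TT e (k+2))
      set D1 := derivative (TT e (k+1))
      set G1 := Gd e (k+1)
      linear_combination (X + C (e (k+2))) * IH1 + IH2 + T2 * hCC + hT +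
        (- T1 - C (e (k+2)) * T1 - C (e (k+2))^2 * T2 - X * T1 - X * C (e (k+2)) * T2) * ptwo

lemma TT_front (e : ℕ → ZMod 2) : ∀ k, TT e (k+2) =
    (X + C (e 0)) * TT (fun i => e (i+1)) (k+1) + TT (fun i => e (i+2)) k := by
  intro k
  induction k using Nat.strong_induction_on with
  | _ k ih =>
    match k with
    | 0 =>
      show (X + C (e 1)) * (X + C (e 0)) + 1 = (X + C (e 0)) * (X + C (e 1)) + 1
      ring
    | 1 =>
      show (X + C (e 2)) * ((X + C (e 1)) * (X + C (e 0)) + 1) + (X + C (e 0))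
        = (X + C (e 0)) * ((X + C (e 2)) * (X + C (e 1)) + 1) + (X + C (e 2))
      ring
    | (k+2) =>
      have i1 := ih (k+1) (by omega)
      have i0 := ih k (by omega)
      have hL : TT e (k+2+2) = (X + C (e (k+3))) * TT e (k+3) + TT e (k+2) := rfl
      have hR1 : TT (fun i => e (i+1)) (k+3)
          = (X + C (e (k+3))) * TT (fun i => e (i+1)) (k+2) + TT (fun i => e (i+1)) (k+1) := rfl
      have hR2 : TT (fun i => e (i+2)) (k+2)
          = (X + C (e (k+3))) * TT (fun i => e (i+2)) (k+1) + TT (fun i => e (i+2)) k := rfl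
      rw [hL, hR1, hR2, show k+3 = k+1+2 from rfl, i1, i0]
      set A1 := TT (fun i => e (i+1)) (k+2)
      set A2 := TT (fun i => e (i+1)) (k+1)
      set B1 := TT (fun i => e (i+2)) (k+1)
      set B2 := TT (fun i => e (i+2)) k
      ring


/-- Explicit form of the charmatrix of the LHCA matrix over 𝔽₂. -/
noncomputable def CM (N : ℕ) (e : ℕ → ZMod 2) : Matrix (Fin N) (Fin N) (Polynomial (ZMod 2)) :=
  Matrix.of fun i j =>
    if i = j then X + C (e i)
    else if (i : ℕ) + 1 = (j : ℕ) ∨ (j : ℕ) + 1 = (i : ℕ) then 1 else 0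

lemma charmatrix_lhca (N : ℕ) (e : ℕ → ZMod 2) :
    Matrix.charmatrix (lhcaMatrix N (fun i : Fin N => e i)) = CM N e := by
  ext i j
  by_cases h : i = j
  · subst h
    rw [Matrix.charmatrix_apply_eq]
    simp [lhcaMatrix, CM, CharTwo.sub_eq_add]
  · rw [Matrix.charmatrix_apply_ne _ _ _ h]
    simp only [lhcaMatrix, CM, Matrix.of_apply, if_neg h]
    split <;> simp [CharTwo.neg_eq]

lemma CM_submatrix (N : ℕ) (e : ℕ → ZMod 2) :
    (CM (N+1) e).submatrix Fin.succ Fin.succ = CM N (fun i => e (i+1)) := by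
  ext i j
  simp only [Matrix.submatrix_apply, CM, Matrix.of_apply, Fin.val_succ, Fin.succ_inj]
  by_cases h : i = j
  · simp [h]
  · simp only [if_neg h]
    by_cases h2 : (i:ℕ)+1 = (j:ℕ) ∨ (j:ℕ)+1 = (i:ℕ)
    · rw [if_pos (by omega), if_pos h2]
    · rw [if_neg (by omega), if_neg h2]

lemma det_CM (N : ℕ) : ∀ e : ℕ → ZMod 2, (CM N e).det = TT e N := by
  induction N using Nat.strong_induction_on with
  | _ N ih =>
    match N with
    | 0 => intro e; rw [Matrix.det_fin_zero]; rfl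
    | 1 =>
      intro e
      rw [Matrix.det_fin_one]
      show (CM 1 e) 0 0 = TT e 1
      simp [CM, TT]
    | (N+2) =>
      intro e
      rw [Matrix.det_succ_row_zero, Fin.sum_univ_succ, Fin.sum_univ_succ]
      have hz : ∀ j : Fin N, CM (N+2) e 0 j.succ.succ = 0 := by
        intro j
        simp only [CM, Matrix.of_apply]
        rw [if_neg (by simp [Fin.ext_iff]), if_neg (by simp [Fin.ext_iff] <;> omega)]
      rw [Finset.sum_eq_zero (fun j _ => by rw [hz j]; ring)]
      -- j = 0 term
      have h00 : CM (N+2) e 0 0 = X + C (e 0) := by simp [CM]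
      have h01 : CM (N+2) e 0 (Fin.succ 0) = 1 := by
        simp only [CM, Matrix.of_apply]
        rw [if_neg (by simp [Fin.ext_iff])]
        rw [if_pos]
        simp [Fin.ext_iff]
      have hsub0 : (CM (N+2) e).submatrix Fin.succ ((0 : Fin (N+2)).succAbove)
          = CM (N+1) (fun i => e (i+1)) := by
        rw [Fin.succAbove_zero, CM_submatrix]
      -- j = 1 term: expand along column 0
      have hB : ((CM (N+2) e).submatrix Fin.succ ((Fin.succ 0 : Fin (N+2)).succAbove)).det
          = (CM N (fun i => e (i+2))).det := by
        set B := (CM (N+2) e).submatrix Fin.succ ((Fin.succ 0 : Fin (N+2)).succAbove) with hBdef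
        rw [Matrix.det_succ_column_zero, Fin.sum_univ_succ]
        have hB00 : B 0 0 = 1 := by
          rw [hBdef]
          simp only [Matrix.submatrix_apply]
          rw [Fin.succAbove_of_castSucc_lt _ _ (by simp [Fin.lt_iff_val_lt_val])]
          simp only [CM, Matrix.of_apply]
          rw [if_neg (by simp [Fin.ext_iff])]
          rw [if_pos]
          simp [Fin.ext_iff]
        have hBz : ∀ i : Fin N, B i.succ 0 = 0 := by
          intro i
          rw [hBdef]
          simp only [Matrix.submatrix_apply]
          rw [Fin.succAbove_of_castSucc_lt _ _ (by simp [Fin.lt_iff_val_lt_val])]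
          simp only [CM, Matrix.of_apply]
          rw [if_neg (by simp [Fin.ext_iff]), if_neg (by simp [Fin.ext_iff] <;> omega)]
        rw [Finset.sum_eq_zero (fun i _ => by rw [hBz i]; ring)]
        have hBsub : B.submatrix ((0 : Fin (N+1)).succAbove) Fin.succ
            = CM N (fun i => e (i+2)) := by
          rw [hBdef, Fin.succAbove_zero, Matrix.submatrix_submatrix]
          have hcomp : ((Fin.succ 0 : Fin (N+2)).succAbove ∘ Fin.succ : Fin N → Fin (N+2))
              = Fin.succ ∘ Fin.succ := by
            funext j
            simp only [Function.comp_apply]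
            rw [Fin.succAbove_succ_of_lt _ _ (Fin.succ_pos j)]
          rw [hcomp]
          rw [show ((CM (N+2) e).submatrix (Fin.succ ∘ Fin.succ) (Fin.succ ∘ Fin.succ))
              = ((CM (N+2) e).submatrix Fin.succ Fin.succ).submatrix Fin.succ Fin.succ from rfl]
          rw [CM_submatrix, CM_submatrix]
        rw [hBsub, hB00]
        simp
      rw [h00, h01, hsub0, hB]
      rw [ih (N+1) (by omega), ih N (by omega)]
      have hf := TT_front e N
      simp only [Fin.val_zero, Fin.val_succ, pow_zero, pow_succ, pow_one]
      set A1 := TT (fun i => e (i+1)) (N+1)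
      set A2 := TT (fun i => e (i+2)) N
      linear_combination hf + (X * A1 + C (e 0) * A1 - TT e (N+2)) * ptwo


lemma ZMod2_unit (a : ZMod 2) (h : a ≠ 0) : a = 1 := by revert a; decide

lemma TT_mod (e : ℕ → ZMod 2) (m : ℕ) :
    TT e (m+2) % TT e (m+1) = TT e m ∧ TT e (m+2) / TT e (m+1) = X + C (e (m+1)) := by
  have h := Polynomial.div_modByMonic_unique (f := TT e (m+2)) (g := TT e (m+1))
    (X + C (e (m+1))) (TT e m) (TT_monic e (m+1))
    ⟨by rw [show TT e (m+2) = (X + C (e (m+1))) * TT e (m+1) + TT e m from rfl]; ring,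
     by rw [TT_degree, TT_degree]; exact_mod_cast by omega⟩
  refine ⟨?_, ?_⟩
  · rw [← Polynomial.modByMonic_eq_mod _ (TT_monic e (m+1)), h.2]
  · rw [← Polynomial.divByMonic_eq_div _ (TT_monic e (m+1)), h.1]

lemma euclid_TT (e : ℕ → ZMod 2) (n : ℕ) :
    ∀ j, j ≤ n → euclidRem (TT e n) (TT e (n-1)) j = TT e (n-j) := by
  intro j
  induction j using Nat.strong_induction_on with
  | _ j ih =>
    match j with
    | 0 => intro _; rfl
    | 1 => intro _; rfl
    | (j+2) =>
      intro hj
      show euclidRem (TT e n) (TT e (n-1)) j % euclidRem (TT e n) (TT e (n-1)) (j+1)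
        = TT e (n-(j+2))
      rw [ih j (by omega) (by omega), ih (j+1) (by omega) (by omega)]
      rw [show n - j = (n-(j+2)) + 2 by omega, show n - (j+1) = (n-(j+2)) + 1 by omega]
      exact (TT_mod e (n-(j+2))).1

lemma eq_X_add_C_of_deg_one (f : Polynomial (ZMod 2)) (h : f.degree = 1) :
    f = X + C (f.coeff 0) := by
  have h1 : f.coeff 1 = 1 := by
    apply ZMod2_unit
    have : f.natDegree = 1 := natDegree_eq_of_degree_eq_some h
    rw [← this]
    exact fun hc => (leadingCoeff_ne_zero.mpr (fun h0 => by simp [h0] at h)) hc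
  have := eq_X_add_C_of_degree_le_one (le_of_eq h)
  rw [h1] at this
  simpa using this

lemma eq_one_of_deg_zero (f : Polynomial (ZMod 2)) (h : f.degree = 0) : f = 1 := by
  have hf0 : f ≠ 0 := fun hc => by simp [hc] at h
  have := eq_C_of_degree_le_zero (le_of_eq h)
  have hc : f.coeff 0 ≠ 0 := fun hc => hf0 (by rw [this, hc, map_zero])
  rw [this, ZMod2_unit _ hc, map_one]

lemma TT_dvd (e : ℕ → ZMod 2) (n : ℕ) (hn : 1 ≤ n) :
    TT e n ∣ (TT e (n-1))^2 + (X^2 + X) * derivative (TT e n) * TT e (n-1) + 1 := by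
  match n, hn with
  | 1, _ =>
    refine ⟨X + C (e 0) + 1, ?_⟩
    have hCC : (C (e 0) : Polynomial (ZMod 2)) * C (e 0) = C (e 0) := by
      rw [← C_mul, ZMod2_sq]
    show (1:Polynomial (ZMod 2))^2 + (X^2+X) * derivative (X + C (e 0)) * 1 + 1
      = (X + C (e 0)) * (X + C (e 0) + 1)
    simp only [derivative_add, derivative_X, derivative_C, add_zero]
    linear_combination (-1 : Polynomial (ZMod 2)) * hCC + (- C (e 0) * X - C (e 0) + 1) * ptwo
  | (m+2), _ =>
    have hE := TT_E e (m+1)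
    have hA := TT_det e m
    refine ⟨Gd e (m+2) * TT e (m+1) + TT (fun i => e (i+1)) m, ?_⟩
    show TT e (m+1)^2 + (X^2 + X) * derivative (TT e (m+2)) * TT e (m+1) + 1
      = TT e (m+2) * (Gd e (m+2) * TT e (m+1) + TT (fun i => e (i+1)) m)
    set T2 := TT e (m+2); set T1 := TT e (m+1)
    set S1 := TT (fun i => e (i+1)) (m+1); set S0 := TT (fun i => e (i+1)) m
    set D := derivative (TT e (m+2)); set G := Gd e (m+2)
    linear_combination T1 * hE - hA

lemma forward_dir (n : ℕ) (hn : 1 ≤ n) (e : ℕ → ZMod 2) :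
    ∃ q : Polynomial (ZMod 2), q.degree < (n : ℕ) ∧
      TT e n ∣ q ^ 2 + (X ^ 2 + X) * derivative (TT e n) * q + 1 ∧
      (∀ i < n, (euclidRem (TT e n) q i / euclidRem (TT e n) q (i + 1)).degree = 1) ∧
      (∀ i ≤ n, (euclidRem (TT e n) q i).degree = (n - i : ℕ)) := by
  refine ⟨TT e (n-1), ?_, TT_dvd e n hn, ?_, ?_⟩
  · rw [TT_degree]; exact_mod_cast by omega
  · intro i hi
    rw [euclid_TT e n i (by omega), euclid_TT e n (i+1) (by omega)]
    by_cases hc : i = n-1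
    · rw [show n - i = 1 by omega, show n - (i+1) = 0 by omega]
      rw [show TT e 0 = 1 from rfl]
      have h1 : TT e 1 / 1 = TT e 1 := by
        rw [← Polynomial.divByMonic_eq_div _ monic_one, Polynomial.divByMonic_one]
      rw [h1, TT_degree]
      rfl
    · rw [show n - i = (n-i-2)+2 by omega, show n - (i+1) = (n-i-2)+1 by omega,
        (TT_mod e (n-i-2)).2, degree_X_add_C]
  · intro i hi
    rw [euclid_TT e n i hi, TT_degree]

lemma backward_dir (n : ℕ) (hn : 1 ≤ n) (p q : Polynomial (ZMod 2))
    (hquot : ∀ i < n, (euclidRem p q i / euclidRem p q (i + 1)).degree = 1)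
    (hdeg : ∀ i ≤ n, (euclidRem p q i).degree = (n - i : ℕ)) :
    ∃ e : ℕ → ZMod 2, p = TT e n := by
  set e : ℕ → ZMod 2 :=
    fun j => (euclidRem p q (n-1-j) / euclidRem p q (n-j)).coeff 0 with he
  have hQ : ∀ j, j < n → euclidRem p q (n-1-j) / euclidRem p q (n-j) = X + C (e j) := by
    intro j hj
    have h := hquot (n-1-j) (by omega)
    rw [show n-1-j+1 = n-j by omega] at h
    exact eq_X_add_C_of_deg_one _ h
  have hrn : euclidRem p q n = 1 := by
    apply eq_one_of_deg_zero
    rw [hdeg n le_rfl]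
    simp
  have key : ∀ k, k ≤ n → euclidRem p q (n-k) = TT e k := by
    intro k
    induction k using Nat.strong_induction_on with
    | _ k ih =>
      match k with
      | 0 =>
        intro _
        rw [Nat.sub_zero, hrn]
        rfl
      | 1 =>
        intro h1
        have hd := EuclideanDomain.div_add_mod (euclidRem p q (n-1)) (euclidRem p q n)
        rw [hrn, one_mul] at hd
        have hmod : euclidRem p q (n-1) % 1 = 0 := EuclideanDomain.mod_one _
        rw [hmod, add_zero] at hd
        have hq0 := hQ 0 (by omega)
        rw [show n-1-0 = n-1 by omega, show n-0 = n by omega, hrn] at hq0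
        rw [← hd, hq0]
        rfl
      | (k+2) =>
        intro hk2
        have hd := EuclideanDomain.div_add_mod (euclidRem p q (n-(k+2)))
          (euclidRem p q (n-(k+2)+1))
        have hmod : euclidRem p q (n-(k+2)) % euclidRem p q (n-(k+2)+1)
            = euclidRem p q (n-(k+2)+2) := rfl
        have hq1 := hQ (k+1) (by omega)
        rw [show n-1-(k+1) = n-(k+2) by omega, show n-(k+1) = n-(k+2)+1 by omega] at hq1
        have h1 := ih (k+1) (by omega) (by omega)
        rw [show n-(k+1) = n-(k+2)+1 by omega] at h1
        have h0 := ih k (by omega) (by omega)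
        rw [show n-k = n-(k+2)+2 by omega] at h0
        rw [hmod, hq1, h1, h0] at hd
        rw [← hd, show TT e (k+2) = (X + C (e (k+1))) * TT e (k+1) + TT e k from rfl]
        ring
  have hfin := key n le_rfl
  rw [Nat.sub_self] at hfin
  exact ⟨e, by rw [← hfin]; rfl⟩


lemma lhcaCharPoly_eq_TT (N : ℕ) (e : ℕ → ZMod 2) :
    lhcaCharPoly N (fun i : Fin N => e i) = TT e N := by
  show (Matrix.charmatrix (lhcaMatrix N (fun i : Fin N => e i))).det = TT e N
  rw [charmatrix_lhca, det_CM]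


/-- Characterization of HCA polynomials: a monic `p ∈ 𝔽₂[X]` of degree `n` is
the characteristic polynomial of some length-`n` LHCA iff there is a
polynomial `q` of degree `< n` solving the quadratic congruence
`q² + (X² + X)·p'·q + 1 ≡ 0 (mod p)` such that Euclid's algorithm on `(p, q)`
yields exactly `n` quotients, each of degree one; equivalently such that the
remainder sequence satisfies `deg rᵢ = n - i` for `0 ≤ i ≤ n`. -/
theorem hca_polynomial_characterization (n : ℕ) (hn : 1 ≤ n)
    (p : Polynomial (ZMod 2)) (hp : p.Monic) (hpdeg : p.natDegree = n) :
    (∃ d : Fin n → ZMod 2, lhcaCharPoly n d = p) ↔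
    (∃ q : Polynomial (ZMod 2), q.degree < (n : ℕ) ∧
      p ∣ q ^ 2 + (X ^ 2 + X) * derivative p * q + 1 ∧
      (∀ i < n, (euclidRem p q i / euclidRem p q (i + 1)).degree = 1) ∧
      (∀ i ≤ n, (euclidRem p q i).degree = (n - i : ℕ))) := by
  constructor
  · rintro ⟨d, hd⟩
    set e : ℕ → ZMod 2 := fun i => if h : i < n then d ⟨i, h⟩ else 0 with he
    have hde : d = fun i : Fin n => e i := by
      funext i
      simp only [he]
      rw [dif_pos i.isLt]
    have hpe : p = TT e n := by
      rw [← hd, hde, lhcaCharPoly_eq_TT]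
    obtain ⟨q, h1, h2, h3, h4⟩ := forward_dir n hn e
    rw [hpe]
    exact ⟨q, h1, h2, h3, h4⟩
  · rintro ⟨q, hq1, hq2, hq3, hq4⟩
    obtain ⟨e, hpe⟩ := backward_dir n hn p q hq3 hq4
    exact ⟨fun i : Fin n => e i, by rw [lhcaCharPoly_eq_TT, hpe]⟩
end
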